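/- arXiv:1905.09895 — 2 statements merged into one kernel-verified Lean document; each statement's English description precedes it below -/
import Mathlib

section
/- Let (X_1,…,X_d) ∈ M_n(ℂ)^d. Then limsup_{k→∞} ( sup_{1≤i_1,…,i_k≤d} ‖X_{i_1}⋯X_{i_k}‖ )^{1/k} ≤ ρ̂(X_1,…,X_d) and (1/√d)·ρ̂(X_1,…,X_d) ≤ liminf_{k→∞} ( sup_{1≤i_1,…,i_k≤d} ‖X_{i_1}⋯X_{i_k}‖ )^{1/k}, where ‖·‖ denotes the operator (spectral) norm on M_n(ℂ). In particular the joint spectral radius ρ(X_1,…,X_d) satisfies (1/√d)·ρ̂(X_1,…,X_d) ≤ ρ(X_1,…,X_d) ≤ ρ̂(X_1,…,X_d). -/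
open scoped Kronecker
open Filter

/-- Operator (spectral) norm of a square complex matrix. -/
noncomputable def matOpNorm {m : Type*} [Fintype m] [DecidableEq m] (A : Matrix m m ℂ) : ℝ :=
  ‖Matrix.toEuclideanCLM (𝕜 := ℂ) A‖

/-- Spectral radius of a square complex matrix: the maximum modulus of its eigenvalues. -/
noncomputable def specRad {m : Type*} [Fintype m] [DecidableEq m] (A : Matrix m m ℂ) : ℝ :=
  sSup ((fun z : ℂ => ‖z‖) '' spectrum ℂ A)

/-- `T = Σᵢ conj(Xᵢ) ⊗ Xᵢ`. -/
noncomputable def outerT {ι m : Type*} [Fintype ι] [Fintype m] [DecidableEq m]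
    (X : ι → Matrix m m ℂ) : Matrix (m × m) (m × m) ℂ :=
  ∑ i, ((X i).map (starRingEnd ℂ)) ⊗ₖ (X i)

/-- The outer spectral radius `ρ̂(X₁,…,X_d) = sqrt (ρ (Σ conj(Xᵢ) ⊗ Xᵢ))`. -/
noncomputable def osr {ι m : Type*} [Fintype ι] [Fintype m] [DecidableEq m]
    (X : ι → Matrix m m ℂ) : ℝ :=
  Real.sqrt (specRad (outerT X))

/-- Supremum of operator norms of words of length `k` in `X`. -/
noncomputable def wordSup {ι m : Type*} [Fintype ι] [Fintype m] [DecidableEq m]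
    (X : ι → Matrix m m ℂ) (k : ℕ) : ℝ :=
  ⨆ f : Fin k → ι, matOpNorm (List.ofFn fun j => X (f j)).prod

/-- The joint spectral radius `ρ(X₁,…,X_d) = limsup_k (sup over words of length k)^(1/k)`. -/
noncomputable def jsr {ι m : Type*} [Fintype ι] [Fintype m] [DecidableEq m]
    (X : ι → Matrix m m ℂ) : ℝ :=
  Filter.limsup (fun k : ℕ => wordSup X k ^ ((k : ℝ)⁻¹)) Filter.atTop

/-! ### Auxiliary material -/

open scoped ENNReal NNReal Topology

section Aux

noncomputable def word {ι m : Type*} [Fintype m] [DecidableEq m]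
    (X : ι → Matrix m m ℂ) {k : ℕ} (f : Fin k → ι) : Matrix m m ℂ :=
  (List.ofFn fun j => X (f j)).prod

lemma wordSup_eq_iSup_word {ι m : Type*} [Fintype ι] [Fintype m] [DecidableEq m]
    (X : ι → Matrix m m ℂ) (k : ℕ) : wordSup X k = ⨆ f : Fin k → ι, matOpNorm (word X f) := rfl

lemma matOpNorm_nonneg {m : Type*} [Fintype m] [DecidableEq m] (A : Matrix m m ℂ) :
    0 ≤ matOpNorm A := norm_nonneg _

lemma euclidean_coord_le {m : Type*} [Fintype m] [DecidableEq m] (y : EuclideanSpace ℂ m)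
    (i : m) : ‖y i‖ ≤ ‖y‖ := by
  have := norm_inner_le_norm (𝕜 := ℂ) (EuclideanSpace.single i (1:ℂ)) y
  rw [EuclideanSpace.inner_single_left] at this
  simpa [EuclideanSpace.norm_single] using this

lemma clm_apply_symm {m : Type*} [Fintype m] [DecidableEq m] (A : Matrix m m ℂ) (x : m → ℂ) :
    Matrix.toEuclideanCLM (𝕜 := ℂ) A ((WithLp.equiv _ _).symm x) =
      (WithLp.equiv _ _).symm (A.mulVec x) := Matrix.toEuclideanCLM_toLp A x

lemma abs_entry_le_matOpNorm {m : Type*} [Fintype m] [DecidableEq m] (A : Matrix m m ℂ) (i j : m) :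
    ‖A i j‖ ≤ matOpNorm A := by
  classical
  have h1 : Matrix.toEuclideanCLM (𝕜 := ℂ) A (EuclideanSpace.single j 1) =
      (WithLp.equiv _ _).symm (A.mulVec (Pi.single j 1)) := clm_apply_symm A (Pi.single j 1)
  have h2 := euclidean_coord_le (Matrix.toEuclideanCLM (𝕜 := ℂ) A (EuclideanSpace.single j 1)) i
  rw [h1] at h2
  have h3 : ((WithLp.equiv 2 (m → ℂ)).symm (A.mulVec (Pi.single j 1))) i = A i j := by
    simp [Matrix.mulVec_single]
  rw [h3] at h2
  calc ‖A i j‖ = ‖A i j‖ := rfl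
    _ ≤ ‖Matrix.toEuclideanCLM (𝕜 := ℂ) A (EuclideanSpace.single j 1)‖ := h1 ▸ h2
    _ ≤ matOpNorm A * ‖(EuclideanSpace.single j 1 : EuclideanSpace ℂ m)‖ :=
        ContinuousLinearMap.le_opNorm _ _
    _ ≤ matOpNorm A * 1 := by
        gcongr
        · exact matOpNorm_nonneg A
        · simp [EuclideanSpace.norm_single]
    _ = matOpNorm A := mul_one _

lemma matOpNorm_le_frob {m : Type*} [Fintype m] [DecidableEq m] (A : Matrix m m ℂ) :
    matOpNorm A ≤ Real.sqrt (∑ i, ∑ j, ‖A i j‖ ^ 2) := by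
  classical
  apply ContinuousLinearMap.opNorm_le_bound _ (Real.sqrt_nonneg _)
  intro x
  set r : m → EuclideanSpace ℂ m := fun i => (WithLp.equiv 2 (m → ℂ)).symm (fun j => starRingEnd ℂ (A i j)) with hr
  have happ : ∀ i, (Matrix.toEuclideanCLM (𝕜 := ℂ) A x) i = inner ℂ (r i) x := by
    intro i
    have hx : x = (WithLp.equiv 2 (m → ℂ)).symm (WithLp.equiv 2 (m → ℂ) x) := rfl
    rw [hx, clm_apply_symm]
    simp only [r, PiLp.inner_apply]
    simp [Matrix.mulVec, dotProduct, RCLike.inner_apply, WithLp.equiv_symm_apply, mul_comm]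
  have hnorm2 : ‖Matrix.toEuclideanCLM (𝕜 := ℂ) A x‖ ^ 2 = ∑ i, ‖(Matrix.toEuclideanCLM (𝕜 := ℂ) A x) i‖ ^ 2 := by
    rw [EuclideanSpace.norm_eq, Real.sq_sqrt]
    positivity
  have hbound : ∀ i, ‖(Matrix.toEuclideanCLM (𝕜 := ℂ) A x) i‖ ^ 2 ≤ (∑ j, ‖A i j‖^2) * ‖x‖ ^ 2 := by
    intro i
    rw [happ i]
    have := norm_inner_le_norm (𝕜 := ℂ) (r i) x
    have hsq : ‖(inner ℂ (r i) x : ℂ)‖ ^ 2 ≤ (‖r i‖ * ‖x‖)^2 := by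
      apply sq_le_sq' _ this
      nlinarith [norm_nonneg (inner ℂ (r i) x : ℂ), norm_nonneg (r i), norm_nonneg x]
    have hri : ‖r i‖ ^ 2 = ∑ j, ‖A i j‖ ^ 2 := by
      rw [EuclideanSpace.norm_eq, Real.sq_sqrt]
      · apply Finset.sum_congr rfl
        intro j _
        simp [r, WithLp.equiv_symm_apply]
      · positivity
    calc ‖(inner ℂ (r i) x : ℂ)‖ ^ 2 ≤ (‖r i‖ * ‖x‖)^2 := hsq
      _ = ‖r i‖^2 * ‖x‖^2 := by ring
      _ = (∑ j, ‖A i j‖^2) * ‖x‖^2 := by rw [hri]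
  have h2 : ‖Matrix.toEuclideanCLM (𝕜 := ℂ) A x‖ ^ 2 ≤ (∑ i, ∑ j, ‖A i j‖ ^ 2) * ‖x‖ ^ 2 := by
    rw [hnorm2, Finset.sum_mul]
    exact Finset.sum_le_sum fun i _ => hbound i
  have hpos : (0:ℝ) ≤ (∑ i, ∑ j, ‖A i j‖ ^ 2) * ‖x‖ ^ 2 :=
    mul_nonneg (Finset.sum_nonneg fun i _ => Finset.sum_nonneg fun j _ => sq_nonneg _) (sq_nonneg _)
  have h3 : ‖Matrix.toEuclideanCLM (𝕜 := ℂ) A x‖ ≤ Real.sqrt ((∑ i, ∑ j, ‖A i j‖ ^ 2) * ‖x‖ ^ 2) :=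
    (Real.le_sqrt (norm_nonneg _) hpos).mpr h2
  rwa [Real.sqrt_mul (Finset.sum_nonneg fun i _ => Finset.sum_nonneg fun j _ => sq_nonneg _),
    Real.sqrt_sq (norm_nonneg _)] at h3

lemma word_cons {ι m : Type*} [Fintype m] [DecidableEq m] (X : ι → Matrix m m ℂ) {k : ℕ}
    (i : ι) (g : Fin k → ι) : word X (Fin.cons i g) = X i * word X g := by
  unfold word
  rw [List.ofFn_succ]
  simp [Fin.cons_zero, Fin.cons_succ]

lemma outerT_pow {ι m : Type*} [Fintype ι] [Fintype m] [DecidableEq m]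
    (X : ι → Matrix m m ℂ) (k : ℕ) :
    (outerT X) ^ k = ∑ f : Fin k → ι, ((word X f).map (starRingEnd ℂ)) ⊗ₖ (word X f) := by
  induction k with
  | zero =>
      rw [pow_zero]
      rw [Fintype.sum_unique (fun f : Fin 0 → ι => ((word X f).map (starRingEnd ℂ)) ⊗ₖ (word X f))]
      simp [word, Matrix.one_kronecker_one, Matrix.map_one (starRingEnd ℂ) (map_zero _) (map_one _)]
  | succ k ih =>
      rw [pow_succ', ih, ← (Fin.consEquiv (fun _ : Fin (k+1) => ι)).sum_comp]
      rw [Fintype.sum_prod_type]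
      unfold outerT
      rw [Finset.sum_mul]
      apply Finset.sum_congr rfl
      intro i _
      rw [Finset.mul_sum]
      apply Finset.sum_congr rfl
      intro g _
      show _ = ((word X (Fin.cons i g)).map (starRingEnd ℂ)) ⊗ₖ (word X (Fin.cons i g))
      rw [word_cons, Matrix.map_mul (f := starRingEnd ℂ), Matrix.mul_kronecker_mul]

lemma prod_sum_mul {m : Type*} [Fintype m] (f g : m → ℝ) :
    ∑ q : m × m, f q.1 * g q.2 = (∑ b, f b) * (∑ d, g d) := by
  rw [Finset.sum_mul_sum]
  exact Fintype.sum_prod_type _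

lemma kron_sq_sum {m : Type*} [Fintype m] (M : Matrix m m ℂ) :
    ∑ p : m × m, ∑ q : m × m, ‖((M.map (starRingEnd ℂ)) ⊗ₖ M) p q‖ ^ 2
      = (∑ a, ∑ b, ‖M a b‖ ^ 2) ^ 2 := by
  have h1 : ∀ p q : m × m, ‖((M.map (starRingEnd ℂ)) ⊗ₖ M) p q‖ ^ 2
      = ‖M p.1 q.1‖^2 * ‖M p.2 q.2‖^2 := by
    intro p q
    show ‖starRingEnd ℂ (M p.1 q.1) * M p.2 q.2‖ ^ 2 = _
    rw [norm_mul, mul_pow]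
    simp
  calc ∑ p : m × m, ∑ q : m × m, ‖((M.map (starRingEnd ℂ)) ⊗ₖ M) p q‖ ^ 2
      = ∑ p : m × m, (∑ b, ‖M p.1 b‖^2) * (∑ d, ‖M p.2 d‖^2) := by
        apply Finset.sum_congr rfl; intro p _
        rw [← prod_sum_mul]
        exact Finset.sum_congr rfl fun q _ => h1 p q
    _ = (∑ a, ∑ b, ‖M a b‖ ^ 2) ^ 2 := by
        rw [sq, ← prod_sum_mul (fun a => ∑ b, ‖M a b‖^2) (fun a => ∑ b, ‖M a b‖^2)]

section FrobSq

variable {ι m : Type*} [Fintype ι] [Fintype m] [DecidableEq m]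

noncomputable def frobSq (X : ι → Matrix m m ℂ) {k : ℕ} (f : Fin k → ι) : ℝ :=
  ∑ a, ∑ b, ‖word X f a b‖ ^ 2

omit [Fintype ι] in
lemma frobSq_nonneg (X : ι → Matrix m m ℂ) {k : ℕ} (f : Fin k → ι) : 0 ≤ frobSq X f :=
  Finset.sum_nonneg fun _ _ => Finset.sum_nonneg fun _ _ => sq_nonneg _

omit [Fintype ι] in
lemma sq_matOpNorm_le_frobSq (X : ι → Matrix m m ℂ) {k : ℕ} (f : Fin k → ι) :
    matOpNorm (word X f) ^ 2 ≤ frobSq X f := by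
  have h := matOpNorm_le_frob (word X f)
  have h2 : matOpNorm (word X f) ^ 2 ≤ Real.sqrt (frobSq X f) ^ 2 := by
    apply pow_le_pow_left₀ (norm_nonneg _) h
  rwa [Real.sq_sqrt (frobSq_nonneg X f)] at h2

lemma diag_sum_eq (X : ι → Matrix m m ℂ) (k : ℕ) :
    ((∑ f : Fin k → ι, frobSq X f : ℝ) : ℂ)
      = ∑ a, ∑ b, ((outerT X) ^ k) (a, a) (b, b) := by
  rw [outerT_pow]
  simp only [Matrix.sum_apply]
  calc ((∑ f : Fin k → ι, frobSq X f : ℝ) : ℂ)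
      = ∑ f : Fin k → ι, ∑ a : m, ∑ b : m, ((‖word X f a b‖ : ℂ)) ^ 2 := by
        unfold frobSq; push_cast; rfl
    _ = ∑ f : Fin k → ι, ∑ a : m, ∑ b : m,
        (((word X f).map (starRingEnd ℂ)) ⊗ₖ (word X f)) (a, a) (b, b) := by
        refine Finset.sum_congr rfl fun f _ => Finset.sum_congr rfl fun a _ =>
          Finset.sum_congr rfl fun b _ => ?_
        show ((‖word X f a b‖ : ℂ)) ^ 2 = starRingEnd ℂ (word X f a b) * (word X f a b)
        rw [mul_comm, Complex.mul_conj, Complex.normSq_eq_norm_sq]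
        norm_cast
    _ = ∑ a : m, ∑ f : Fin k → ι, ∑ b : m,
        (((word X f).map (starRingEnd ℂ)) ⊗ₖ (word X f)) (a, a) (b, b) := Finset.sum_comm
    _ = ∑ a : m, ∑ b : m, ∑ f : Fin k → ι,
        (((word X f).map (starRingEnd ℂ)) ⊗ₖ (word X f)) (a, a) (b, b) :=
        Finset.sum_congr rfl fun a _ => Finset.sum_comm

lemma sum_frobSq_le (X : ι → Matrix m m ℂ) (k : ℕ) :
    ∑ f : Fin k → ι, frobSq X f
      ≤ (Fintype.card m)^2 * matOpNorm ((outerT X) ^ k) := by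
  have h0 : ∑ f : Fin k → ι, frobSq X f = ‖((∑ f : Fin k → ι, frobSq X f : ℝ) : ℂ)‖ := by
    rw [Complex.norm_real, Real.norm_eq_abs, abs_of_nonneg (Finset.sum_nonneg fun f _ => frobSq_nonneg X f)]
  rw [h0, diag_sum_eq]
  calc ‖∑ a, ∑ b, ((outerT X) ^ k) (a, a) (b, b)‖
      ≤ ∑ a, ∑ b, ‖((outerT X) ^ k) (a, a) (b, b)‖ := by
        refine (norm_sum_le _ _).trans ?_
        exact Finset.sum_le_sum fun a _ => norm_sum_le _ _
    _ ≤ ∑ _a : m, ∑ _b : m, matOpNorm ((outerT X) ^ k) :=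
        Finset.sum_le_sum fun a _ => Finset.sum_le_sum fun b _ =>
          abs_entry_le_matOpNorm _ _ _
    _ = (Fintype.card m)^2 * matOpNorm ((outerT X) ^ k) := by
        simp only [Finset.sum_const, Finset.card_univ, nsmul_eq_mul]; ring

lemma matOpNorm_pow_le_sum (X : ι → Matrix m m ℂ) (k : ℕ) :
    matOpNorm ((outerT X) ^ k) ≤ ∑ f : Fin k → ι, frobSq X f := by
  rw [outerT_pow]
  unfold matOpNorm
  rw [map_sum]
  refine (norm_sum_le _ _).trans ?_
  apply Finset.sum_le_sum
  intro f _
  have h := matOpNorm_le_frob (((word X f).map (starRingEnd ℂ)) ⊗ₖ (word X f))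
  rw [kron_sq_sum] at h
  rw [show (∑ a, ∑ b, ‖word X f a b‖^2) = frobSq X f from rfl,
    Real.sqrt_sq (frobSq_nonneg X f)] at h
  exact h

omit [Fintype ι] in
lemma frobSq_le (X : ι → Matrix m m ℂ) {k : ℕ} (f : Fin k → ι) :
    frobSq X f ≤ (Fintype.card m)^2 * matOpNorm (word X f) ^ 2 := by
  unfold frobSq
  calc ∑ a, ∑ b, ‖word X f a b‖ ^ 2
      ≤ ∑ _a : m, ∑ _b : m, matOpNorm (word X f) ^ 2 := by
        refine Finset.sum_le_sum fun a _ => Finset.sum_le_sum fun b _ => ?_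
        have := abs_entry_le_matOpNorm (word X f) a b
        have hn : ‖word X f a b‖ = ‖word X f a b‖ := rfl
        rw [hn]
        apply pow_le_pow_left₀ (norm_nonneg _) this
    _ = (Fintype.card m)^2 * matOpNorm (word X f) ^ 2 := by
        simp only [Finset.sum_const, Finset.card_univ, nsmul_eq_mul]; ring

end FrobSq

section Spectral

variable {m : Type*} [Fintype m] [DecidableEq m]

lemma spectrum_clm_eq (A : Matrix m m ℂ) :
    spectrum ℂ (Matrix.toEuclideanCLM (𝕜 := ℂ) A) = spectrum ℂ A :=
  AlgEquiv.spectrum_eq (Matrix.toEuclideanCLM (𝕜 := ℂ)) A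

lemma specRad_eq_toReal [Nonempty m] (A : Matrix m m ℂ) :
    specRad A = (spectralRadius ℂ (Matrix.toEuclideanCLM (𝕜 := ℂ) A)).toReal := by
  obtain ⟨z, hz, hznorm⟩ := spectrum.exists_nnnorm_eq_spectralRadius (Matrix.toEuclideanCLM (𝕜 := ℂ) A)
  have hbdd : BddAbove ((fun z : ℂ => ‖z‖) '' spectrum ℂ A) := by
    refine ⟨matOpNorm A, ?_⟩
    rintro x ⟨w, hw, rfl⟩
    rw [← spectrum_clm_eq] at hw
    exact spectrum.norm_le_norm_of_mem hw
  have hmem : z ∈ spectrum ℂ A := by rwa [spectrum_clm_eq] at hz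
  apply le_antisymm
  · apply csSup_le
    · exact ⟨‖z‖, ⟨z, hmem, rfl⟩⟩
    · rintro x ⟨w, hw, rfl⟩
      rw [← spectrum_clm_eq] at hw
      have h1 : (‖w‖₊ : ℝ≥0∞) ≤ spectralRadius ℂ (Matrix.toEuclideanCLM (𝕜 := ℂ) A) :=
        le_iSup₂ (f := fun k (_ : k ∈ spectrum ℂ (Matrix.toEuclideanCLM (𝕜 := ℂ) A)) => (‖k‖₊ : ℝ≥0∞)) w hw
      have h2 : spectralRadius ℂ (Matrix.toEuclideanCLM (𝕜 := ℂ) A) ≠ (⊤ : ℝ≥0∞) :=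
        ((spectrum.spectralRadius_le_nnnorm (𝕜 := ℂ) _).trans_lt ENNReal.coe_lt_top).ne
      have := ENNReal.toReal_mono h2 h1
      simpa using this
  · rw [← hznorm]
    simp only [ENNReal.coe_toReal, coe_nnnorm]
    exact le_csSup hbdd ⟨z, hmem, rfl⟩

lemma gelfand_tendsto [Nonempty m] (A : Matrix m m ℂ) :
    Tendsto (fun k : ℕ => matOpNorm (A ^ k) ^ ((k : ℝ)⁻¹)) atTop (𝓝 (specRad A)) := by
  have h := spectrum.pow_nnnorm_pow_one_div_tendsto_nhds_spectralRadius
    (Matrix.toEuclideanCLM (𝕜 := ℂ) A)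
  have hfin : spectralRadius ℂ (Matrix.toEuclideanCLM (𝕜 := ℂ) A) ≠ (⊤ : ℝ≥0∞) :=
    ((spectrum.spectralRadius_le_nnnorm (𝕜 := ℂ) _).trans_lt ENNReal.coe_lt_top).ne
  have h2 := (ENNReal.tendsto_toReal hfin).comp h
  rw [specRad_eq_toReal]
  convert h2 using 2 with k
  rw [Function.comp_apply, ← ENNReal.toReal_rpow]
  simp only [ENNReal.coe_toReal, coe_nnnorm]
  rw [one_div]
  congr 1
  unfold matOpNorm
  rw [map_pow]

lemma specRad_pow_le [Nonempty m] (A : Matrix m m ℂ) (k : ℕ) :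
    specRad A ^ k ≤ matOpNorm (A ^ k) := by
  obtain ⟨z, hz, hznorm⟩ := spectrum.exists_nnnorm_eq_spectralRadius (Matrix.toEuclideanCLM (𝕜 := ℂ) A)
  have hzr : specRad A = ‖z‖ := by
    rw [specRad_eq_toReal, ← hznorm]; simp
  rw [hzr]
  have hpow : z ^ k ∈ spectrum ℂ ((Matrix.toEuclideanCLM (𝕜 := ℂ) A) ^ k) := by
    have := spectrum.subset_polynomial_aeval (Matrix.toEuclideanCLM (𝕜 := ℂ) A) (Polynomial.X ^ k : Polynomial ℂ)
    have hmem : z ^ k ∈ (fun x => Polynomial.eval x (Polynomial.X ^ k : Polynomial ℂ)) '' spectrum ℂ (Matrix.toEuclideanCLM (𝕜 := ℂ) A) :=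
      ⟨z, hz, by simp⟩
    have h2 := this hmem
    simpa using h2
  have := spectrum.norm_le_norm_of_mem hpow
  rw [← norm_pow]
  unfold matOpNorm
  rw [map_pow]
  exact this

lemma specRad_nonneg [Nonempty m] (A : Matrix m m ℂ) : 0 ≤ specRad A := by
  rw [specRad_eq_toReal]; exact ENNReal.toReal_nonneg

end Spectral

lemma tendsto_rpow_inv_nat_one {c : ℝ} (hc : 0 < c) :
    Tendsto (fun k : ℕ => c ^ ((k : ℝ)⁻¹)) atTop (𝓝 1) := by
  simp only [Real.rpow_def_of_pos hc]
  have h1 : Tendsto (fun k : ℕ => Real.log c * ((k : ℝ))⁻¹) atTop (𝓝 (Real.log c * 0)) :=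
    tendsto_inv_atTop_nhds_zero_nat.const_mul (Real.log c)
  rw [mul_zero] at h1
  have := (Real.continuous_exp.tendsto 0).comp h1
  simpa [Function.comp_def] using this

lemma wordSup_nonneg {ι m : Type*} [Fintype ι] [Fintype m] [DecidableEq m]
    (X : ι → Matrix m m ℂ) (k : ℕ) : 0 ≤ wordSup X k :=
  Real.iSup_nonneg fun _ => matOpNorm_nonneg _

end Aux

/-- `limsup (sup-norms)^{1/k} ≤ ρ̂`, `(1/√d)·ρ̂ ≤ liminf (sup-norms)^{1/k}`,
and in particular `(1/√d)·ρ̂ ≤ ρ ≤ ρ̂` for the joint spectral radius `ρ`. -/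
theorem stmt1 {n d : ℕ} (X : Fin d → Matrix (Fin n) (Fin n) ℂ) :
    Filter.limsup (fun k : ℕ => wordSup X k ^ ((k : ℝ)⁻¹)) Filter.atTop ≤ osr X ∧
    (1 / Real.sqrt d) * osr X ≤
      Filter.liminf (fun k : ℕ => wordSup X k ^ ((k : ℝ)⁻¹)) Filter.atTop ∧
    (1 / Real.sqrt d) * osr X ≤ jsr X ∧ jsr X ≤ osr X := by
  classical
  set a : ℕ → ℝ := fun k => wordSup X k ^ ((k : ℝ)⁻¹) with ha_def
  have ha_nonneg : ∀ k, 0 ≤ a k := fun k => Real.rpow_nonneg (wordSup_nonneg X k) _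
  have key : Filter.limsup a Filter.atTop ≤ osr X ∧
      (1 / Real.sqrt d) * osr X ≤ Filter.liminf a Filter.atTop ∧
      Filter.liminf a Filter.atTop ≤ Filter.limsup a Filter.atTop := by
    rcases Nat.eq_zero_or_pos n with hn | hn
    · -- degenerate case n = 0
      subst hn
      have hzero : ∀ A : Matrix (Fin 0) (Fin 0) ℂ, matOpNorm A = 0 := by
        intro A
        refine le_antisymm ?_ (matOpNorm_nonneg A)
        have := matOpNorm_le_frob A
        simpa using this
      have hws : ∀ k, wordSup X k = 0 := by
        intro k
        refine le_antisymm (Real.iSup_le (fun f => (hzero _).le) le_rfl) (wordSup_nonneg X k)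
      have haz : ∀ᶠ k in atTop, a k = 0 := by
        filter_upwards [eventually_ge_atTop 1] with k hk
        have : ((k : ℝ))⁻¹ ≠ 0 := by
          simp only [ne_eq, inv_eq_zero, Nat.cast_eq_zero]
          omega
        simp [ha_def, hws k, Real.zero_rpow this]
      have hlimsup : Filter.limsup a Filter.atTop = 0 := by
        rw [Filter.limsup_congr haz]; exact Filter.limsup_const 0
      have hliminf : Filter.liminf a Filter.atTop = 0 := by
        rw [Filter.liminf_congr haz]; exact Filter.liminf_const 0
      have hsub : Subsingleton (Matrix (Fin 0 × Fin 0) (Fin 0 × Fin 0) ℂ) := by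
        constructor
        intro A B
        ext i j
        exact i.1.elim0
      have hspec : spectrum ℂ (outerT X) = ∅ := by
        apply Set.eq_empty_of_forall_notMem
        intro z hz
        rw [spectrum.mem_iff] at hz
        exact hz (@isUnit_of_subsingleton _ _ hsub _)
      have hosr : osr X = 0 := by
        unfold osr specRad
        rw [hspec, Set.image_empty, Real.sSup_empty, Real.sqrt_zero]
      refine ⟨by rw [hlimsup, hosr], by rw [hliminf, hosr, mul_zero], by rw [hlimsup, hliminf]⟩
    · -- main case n ≥ 1
      have : Nonempty (Fin n) := ⟨⟨0, hn⟩⟩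
      have : Nonempty (Fin n × Fin n) := inferInstance
      set T : Matrix (Fin n × Fin n) (Fin n × Fin n) ℂ := outerT X with hT
      set L : ℝ := specRad T with hLdef
      have hL0 : 0 ≤ L := specRad_nonneg T
      have hosr : osr X = Real.sqrt L := rfl
      have hn' : (0:ℝ) < (n:ℝ) := by exact_mod_cast hn
      -- upper bound per k
      have h1 : ∀ k, wordSup X k ≤ Real.sqrt ((n:ℝ)^2 * matOpNorm (T ^ k)) := by
        intro k
        rw [wordSup_eq_iSup_word]
        apply Real.iSup_le _ (Real.sqrt_nonneg _)
        intro f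
        have hb : matOpNorm (word X f) ^ 2 ≤ (n:ℝ)^2 * matOpNorm (T ^ k) := by
          calc matOpNorm (word X f) ^ 2 ≤ frobSq X f := sq_matOpNorm_le_frobSq X f
            _ ≤ ∑ g : Fin k → Fin d, frobSq X g :=
                Finset.single_le_sum (fun g _ => frobSq_nonneg X g) (Finset.mem_univ f)
            _ ≤ (n:ℝ)^2 * matOpNorm (T ^ k) := by
                have := sum_frobSq_le X k
                simpa [Fintype.card_fin] using this
        have := Real.sqrt_le_sqrt hb
        rwa [Real.sqrt_sq (matOpNorm_nonneg _)] at this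
      -- comparison sequences
      set b : ℕ → ℝ := fun k => Real.sqrt (((n:ℝ)^2) ^ ((k:ℝ)⁻¹) * matOpNorm (T ^ k) ^ ((k:ℝ)⁻¹)) with hb_def
      have h2 : ∀ k, a k ≤ b k := by
        intro k
        have step1 : a k ≤ (Real.sqrt ((n:ℝ)^2 * matOpNorm (T ^ k))) ^ ((k:ℝ)⁻¹) :=
          Real.rpow_le_rpow (wordSup_nonneg X k) (h1 k) (by positivity)
        have hx0 : (0:ℝ) ≤ (n:ℝ)^2 * matOpNorm (T ^ k) :=
          mul_nonneg (by positivity) (matOpNorm_nonneg _)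
        have step2 : (Real.sqrt ((n:ℝ)^2 * matOpNorm (T ^ k))) ^ ((k:ℝ)⁻¹)
            = Real.sqrt (((n:ℝ)^2) ^ ((k:ℝ)⁻¹) * matOpNorm (T ^ k) ^ ((k:ℝ)⁻¹)) := by
          simp only [Real.sqrt_eq_rpow]
          rw [← Real.rpow_mul hx0, mul_comm (1/2 : ℝ) ((k:ℝ)⁻¹), Real.rpow_mul hx0,
            Real.mul_rpow (by positivity) (matOpNorm_nonneg _)]
        exact step1.trans (le_of_eq step2)
      have hu : Tendsto (fun k : ℕ => matOpNorm (T ^ k) ^ ((k : ℝ)⁻¹)) atTop (𝓝 L) :=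
        gelfand_tendsto T
      have hb_tendsto : Tendsto b atTop (𝓝 (Real.sqrt L)) := by
        have hg : Tendsto (fun k : ℕ => ((n:ℝ)^2) ^ ((k:ℝ)⁻¹) * matOpNorm (T ^ k) ^ ((k:ℝ)⁻¹))
            atTop (𝓝 (1 * L)) :=
          (tendsto_rpow_inv_nat_one (by positivity)).mul hu
        rw [one_mul] at hg
        exact (Real.continuous_sqrt.tendsto L).comp hg
      have ha_bdd_above : IsBoundedUnder (· ≤ ·) atTop a :=
        hb_tendsto.isBoundedUnder_le.mono_le (Eventually.of_forall h2)
      have ha_bdd_below : IsBoundedUnder (· ≥ ·) atTop a :=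
        isBoundedUnder_of ⟨0, fun k => ha_nonneg k⟩
      have hlimsup : Filter.limsup a Filter.atTop ≤ osr X := by
        rw [hosr]
        calc Filter.limsup a Filter.atTop ≤ Filter.limsup b Filter.atTop :=
            Filter.limsup_le_limsup (Eventually.of_forall h2)
              ha_bdd_below.isCoboundedUnder_le hb_tendsto.isBoundedUnder_le
          _ = Real.sqrt L := hb_tendsto.limsup_eq
      -- lower bound
      have h3 : ∀ k, L ^ k ≤ (d:ℝ)^k * ((n:ℝ)^2 * wordSup X k ^ 2) := by
        intro k
        calc L ^ k ≤ matOpNorm (T ^ k) := specRad_pow_le T k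
          _ ≤ ∑ f : Fin k → Fin d, frobSq X f := matOpNorm_pow_le_sum X k
          _ ≤ ∑ _f : Fin k → Fin d, ((n:ℝ)^2 * wordSup X k ^ 2) := by
              apply Finset.sum_le_sum
              intro f _
              have hf1 : frobSq X f ≤ (Fintype.card (Fin n))^2 * matOpNorm (word X f) ^ 2 :=
                frobSq_le X f
              have hf2 : matOpNorm (word X f) ≤ wordSup X k := by
                rw [wordSup_eq_iSup_word]
                exact le_ciSup (Set.Finite.bddAbove
                  (Set.finite_range (fun g : Fin k → Fin d => matOpNorm (word X g)))) f
              have hf3 : matOpNorm (word X f) ^ 2 ≤ wordSup X k ^ 2 :=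
                pow_le_pow_left₀ (matOpNorm_nonneg _) hf2 2
              calc frobSq X f ≤ (Fintype.card (Fin n))^2 * matOpNorm (word X f) ^ 2 := hf1
                _ ≤ (Fintype.card (Fin n))^2 * wordSup X k ^ 2 := by
                    apply mul_le_mul_of_nonneg_left hf3 (by positivity)
                _ = (n:ℝ)^2 * wordSup X k ^ 2 := by rw [Fintype.card_fin]
          _ = (d:ℝ)^k * ((n:ℝ)^2 * wordSup X k ^ 2) := by
              rw [Finset.sum_const, Finset.card_univ, Fintype.card_fun, nsmul_eq_mul]
              push_cast [Fintype.card_fin]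
              ring
      set q : ℝ := Real.sqrt (L / d) with hq_def
      have hq0 : 0 ≤ q := Real.sqrt_nonneg _
      have h4 : ∀ k : ℕ, 1 ≤ k → q / ((n:ℝ) ^ ((k:ℝ)⁻¹)) ≤ a k := by
        intro k hk
        have hkR : ((k:ℝ))⁻¹ ≠ 0 := by
          simp only [ne_eq, inv_eq_zero, Nat.cast_eq_zero]; omega
        -- (L/d)^k ≤ n² wordSup²
        have hstep : (L / d) ^ k ≤ (n:ℝ)^2 * wordSup X k ^ 2 := by
          rcases eq_or_ne (d:ℝ) 0 with hd | hd
          · rw [hd, div_zero, zero_pow (by omega : k ≠ 0)]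
            positivity
          · have hd' : (0:ℝ) < (d:ℝ) := lt_of_le_of_ne (Nat.cast_nonneg d) (Ne.symm hd)
            rw [div_pow, div_le_iff₀ (by positivity)]
            calc L ^ k ≤ (d:ℝ)^k * ((n:ℝ)^2 * wordSup X k ^ 2) := h3 k
              _ = (n:ℝ)^2 * wordSup X k ^ 2 * (d:ℝ)^k := by ring
        -- q^k ≤ n * wordSup
        have hqk : q ^ k ≤ (n:ℝ) * wordSup X k := by
          have hsq : (q ^ k) ^ 2 = (L / d) ^ k := by
            rw [← pow_mul, mul_comm k 2, pow_mul, Real.sq_sqrt (div_nonneg hL0 (Nat.cast_nonneg d))]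
          have h5 : (q ^ k) ^ 2 ≤ ((n:ℝ) * wordSup X k) ^ 2 := by
            rw [hsq, mul_pow]; exact hstep
          exact (pow_le_pow_iff_left₀ (by positivity) (mul_nonneg hn'.le (wordSup_nonneg X k)) (by norm_num)).mp h5
        -- wordSup ≥ q^k / n
        have hws : q ^ k / (n:ℝ) ≤ wordSup X k := by
          rw [div_le_iff₀ hn']
          calc q ^ k ≤ (n:ℝ) * wordSup X k := hqk
            _ = wordSup X k * (n:ℝ) := mul_comm _ _
        have hmono : (q ^ k / (n:ℝ)) ^ ((k:ℝ)⁻¹) ≤ a k :=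
          Real.rpow_le_rpow (by positivity) hws (by positivity)
        have heq : (q ^ k / (n:ℝ)) ^ ((k:ℝ)⁻¹) = q / ((n:ℝ) ^ ((k:ℝ)⁻¹)) := by
          rw [Real.div_rpow (by positivity) hn'.le, ← Real.rpow_natCast q k,
            ← Real.rpow_mul hq0, mul_inv_cancel₀ (by
              simp only [ne_eq, Nat.cast_eq_zero]; omega), Real.rpow_one]
        rw [← heq]; exact hmono
      set c : ℕ → ℝ := fun k => q / ((n:ℝ) ^ ((k:ℝ)⁻¹)) with hc_def
      have hc_tendsto : Tendsto c atTop (𝓝 q) := by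
        have hg : Tendsto (fun k : ℕ => (n:ℝ) ^ ((k:ℝ)⁻¹)) atTop (𝓝 1) :=
          tendsto_rpow_inv_nat_one hn'
        have := (tendsto_const_nhds (x := q) (f := atTop)).div hg one_ne_zero
        simpa [Pi.div_def] using this
      have hliminf : q ≤ Filter.liminf a Filter.atTop := by
        have h5 : Filter.liminf c Filter.atTop = q := hc_tendsto.liminf_eq
        rw [← h5]
        apply Filter.liminf_le_liminf
        · filter_upwards [eventually_ge_atTop 1] with k hk
          exact h4 k hk
        · exact hc_tendsto.isBoundedUnder_ge
        · exact ha_bdd_above.isCoboundedUnder_ge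
      have hq_eq : (1 / Real.sqrt d) * osr X = q := by
        rw [hosr, hq_def, Real.sqrt_div hL0, one_div, inv_mul_eq_div]
      refine ⟨hlimsup, ?_, Filter.liminf_le_limsup ha_bdd_above ha_bdd_below⟩
      rw [hq_eq]
      exact hliminf
  obtain ⟨k1, k2, k3⟩ := key
  exact ⟨k1, k2, le_trans k2 k3, k1⟩
end

section
/- Let A_1,…,A_p ∈ M_n(ℂ) and B_1,…,B_q ∈ M_n(ℂ), and suppose each B_k lies in the linear span of {A_1,…,A_p}. Then there exists ε > 0 such that for every positive semidefinite H ∈ M_n(ℂ), the matrix Σ_{j=1}^p A_j H A_j^* − ε Σ_{k=1}^q B_k H B_k^* is positive semidefinite. -/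
open scoped ComplexOrder
open Matrix

private lemma quad_eq {n : ℕ} (C : Matrix (Fin n) (Fin n) ℂ) (x : Fin n → ℂ) :
    star x ⬝ᵥ ((Cᴴ * C) *ᵥ x) = ((∑ i, ‖(C *ᵥ x) i‖ ^ 2 : ℝ) : ℂ) := by
  rw [← Matrix.mulVec_mulVec, Matrix.dotProduct_mulVec, ← Matrix.star_mulVec]
  push_cast
  simp [dotProduct, mul_comm, Complex.mul_conj']

private lemma sum_mulVec' {ι m : Type*} [Fintype ι] [Fintype m]
    (M : ι → Matrix m m ℂ) (x : m → ℂ) :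
    (∑ j, M j) *ᵥ x = ∑ j, M j *ᵥ x := by
  ext i
  simp [Matrix.mulVec, dotProduct, Finset.sum_apply, Matrix.sum_apply,
    Finset.sum_mul]
  rw [Finset.sum_comm]

private lemma dot_sum' {ι m : Type*} [Fintype ι] [Fintype m]
    (v : m → ℂ) (w : ι → m → ℂ) :
    v ⬝ᵥ (∑ j, w j) = ∑ j, v ⬝ᵥ w j := by
  simp [dotProduct, Finset.mul_sum, Finset.sum_apply]
  rw [Finset.sum_comm]

/-- if each `Bₖ` lies in the span of the `Aⱼ`, then there is `ε > 0` such
that `Σⱼ Aⱼ H Aⱼ^* − ε Σₖ Bₖ H Bₖ^*` is positive semidefinite for every positive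
semidefinite `H`. -/
theorem stmt15 {n p q : ℕ} (A : Fin p → Matrix (Fin n) (Fin n) ℂ)
    (B : Fin q → Matrix (Fin n) (Fin n) ℂ)
    (hB : ∀ k, B k ∈ Submodule.span ℂ (Set.range A)) :
    ∃ ε : ℝ, 0 < ε ∧ ∀ H : Matrix (Fin n) (Fin n) ℂ, H.PosSemidef →
      ((∑ j, A j * H * (A j)ᴴ) - (ε : ℂ) • ∑ k, B k * H * (B k)ᴴ).PosSemidef := by
  choose c hc using fun k => (Submodule.mem_span_range_iff_exists_fun ℂ).mp (hB k)
  set M : ℝ := ∑ k, ∑ j, ‖c k j‖ ^ 2 with hM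
  have hM0 : 0 ≤ M := Finset.sum_nonneg fun k _ =>
    Finset.sum_nonneg fun j _ => sq_nonneg _
  refine ⟨1 / (M + 1), by positivity, fun H hH => ?_⟩
  obtain ⟨W, hW⟩ : ∃ W : Matrix (Fin n) (Fin n) ℂ, H = Wᴴ * W := by
    open scoped MatrixOrder in
    obtain ⟨W, hW⟩ := CStarAlgebra.nonneg_iff_eq_star_mul_self.mp hH.nonneg
    exact ⟨W, hW⟩
  set ε : ℝ := 1 / (M + 1) with hε
  have hC : ∀ C : Matrix (Fin n) (Fin n) ℂ, (C * H * Cᴴ)ᴴ = C * H * Cᴴ :=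
    fun C => (hH.mul_mul_conjTranspose_same C).1
  rw [Matrix.posSemidef_iff_dotProduct_mulVec]
  constructor
  · show _ᴴ = _
    rw [conjTranspose_sub, conjTranspose_smul, conjTranspose_sum, conjTranspose_sum]
    simp only [hC, Complex.star_def, Complex.conj_ofReal]
  intro x
  -- rewrite each quadratic form
  have key : ∀ C : Matrix (Fin n) (Fin n) ℂ,
      star x ⬝ᵥ ((C * H * Cᴴ) *ᵥ x) = ((∑ i, ‖((W * Cᴴ) *ᵥ x) i‖ ^ 2 : ℝ) : ℂ) := by
    intro C
    have : C * H * Cᴴ = (W * Cᴴ)ᴴ * (W * Cᴴ) := by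
      rw [hW]; simp only [conjTranspose_mul, conjTranspose_conjTranspose]
      noncomm_ring
    rw [this, quad_eq]
  set y : Fin p → Fin n → ℂ := fun j => (W * (A j)ᴴ) *ᵥ x with hy
  set z : Fin q → Fin n → ℂ := fun k => (W * (B k)ᴴ) *ᵥ x with hz
  set T : ℝ := ∑ j, ∑ i, ‖y j i‖ ^ 2 with hT
  set Z : ℝ := ∑ k, ∑ i, ‖z k i‖ ^ 2 with hZ
  have hT0 : 0 ≤ T := Finset.sum_nonneg fun _ _ =>
    Finset.sum_nonneg fun _ _ => sq_nonneg _
  have expand : star x ⬝ᵥ (((∑ j, A j * H * (A j)ᴴ)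
      - (ε : ℂ) • ∑ k, B k * H * (B k)ᴴ) *ᵥ x) = ((T - ε * Z : ℝ) : ℂ) := by
    rw [Matrix.sub_mulVec, dotProduct_sub, Matrix.smul_mulVec,
      dotProduct_smul, sum_mulVec', sum_mulVec', dot_sum', dot_sum']
    simp only [key, hT, hZ, smul_eq_mul]
    push_cast
    ring
  rw [expand, Complex.zero_le_real, sub_nonneg]
  -- z k i = ∑ j, conj (c k j) * y j i
  have hzy : ∀ k i, z k i = ∑ j, (starRingEnd ℂ) (c k j) * y j i := by
    intro k i
    have : (B k)ᴴ = ∑ j, (starRingEnd ℂ) (c k j) • (A j)ᴴ := by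
      rw [← hc k]; simp [conjTranspose_sum, conjTranspose_smul, Complex.star_def]
    simp only [hz, this, Finset.mul_sum, Matrix.mul_smul,
      Matrix.smul_mulVec, sum_mulVec', Finset.sum_apply, Pi.smul_apply,
      smul_eq_mul, hy]
  -- Cauchy–Schwarz bound: Z ≤ M * T
  have hZM : Z ≤ M * T := by
    rw [hZ, hM, Finset.sum_mul]
    refine Finset.sum_le_sum fun k _ => ?_
    calc ∑ i, ‖z k i‖ ^ 2
        ≤ ∑ i, (∑ j, ‖c k j‖ ^ 2) * ∑ j, ‖y j i‖ ^ 2 := by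
          refine Finset.sum_le_sum fun i _ => ?_
          calc ‖z k i‖ ^ 2 ≤ (∑ j, ‖c k j‖ * ‖y j i‖) ^ 2 := by
                have h1 : ‖z k i‖ ≤ ∑ j, ‖c k j‖ * ‖y j i‖ := by
                  rw [hzy k i]
                  refine (norm_sum_le _ _).trans (le_of_eq ?_)
                  simp [norm_mul]
                exact pow_le_pow_left₀ (norm_nonneg _) h1 2
            _ ≤ (∑ j, ‖c k j‖ ^ 2) * ∑ j, ‖y j i‖ ^ 2 :=
                Finset.sum_mul_sq_le_sq_mul_sq _ _ _
      _ = (∑ j, ‖c k j‖ ^ 2) * T := by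
          rw [← Finset.mul_sum, hT, Finset.sum_comm]
  calc ε * Z ≤ ε * (M * T) := by
        exact mul_le_mul_of_nonneg_left hZM (by positivity)
    _ ≤ 1 * T := by
        rw [← mul_assoc]
        refine mul_le_mul_of_nonneg_right ?_ hT0
        rw [hε, div_mul_eq_mul_div, one_mul, div_le_one (by linarith)]
        linarith
    _ = T := one_mul T
end
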